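/- Suppose real numbers u_1,...,u_T satisfy u_t − u_s ≥ μ^t(x^s) − μ^t(x^t) for all t, s, and define u : X → ℝ by u(x) = min_t { u_t + μ^t(x^t) − μ^t(x) }. Then the quasilinear utility v(x,m) = u(x) + m rationalizes the experiment: for every t and every (x,m) ∈ B^t = {(x,m) : μ^t(x) ≥ m}, we have u(x) + m ≤ u(x^t) + μ^t(x^t). -/

import Mathlib

section AfriatUtility

variable {ι α : Type*} [Finite ι] (uv : ι → ℝ) (μ : ι → α → ℝ) (xs : ι → α)

noncomputable def afriatUtility (x : α) : ℝ :=
  ⨅ t, uv t + μ t (xs t) - μ t x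

theorem afriatUtility_le (t : ι) (x : α) :
    afriatUtility uv μ xs x ≤ uv t + μ t (xs t) - μ t x :=
  ciInf_le (Set.finite_range _).bddBelow t

variable {uv μ xs} in
theorem afriatUtility_apply_self
    (hafriat : ∀ t s : ι, uv t - uv s ≥ μ t (xs s) - μ t (xs t)) (t : ι) :
    afriatUtility uv μ xs (xs t) = uv t := by
  have : Nonempty ι := ⟨t⟩
  refine le_antisymm ?_ (le_ciInf fun s => ?_)
  · simpa using afriatUtility_le uv μ xs t (xs t)
  · linarith [hafriat s t]

end AfriatUtility

theorem afriat_extension_rationalizes_general {n T : ℕ}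
    (X : Set (Fin n → ℝ)) (xs : Fin T → (Fin n → ℝ))
    (μ : Fin T → (Fin n → ℝ) → ℝ)
    (uv : Fin T → ℝ)
    (hafriat : ∀ t s : Fin T, uv t - uv s ≥ μ t (xs s) - μ t (xs t))
    (u : (Fin n → ℝ) → ℝ)
    (hu : ∀ x, u x = sInf (Set.range fun t : Fin T => uv t + μ t (xs t) - μ t x)) :
    ∀ t, ∀ x ∈ X, ∀ m : ℝ, m ≤ μ t x → u x + m ≤ u (xs t) + μ t (xs t) := by
  obtain rfl : u = afriatUtility uv μ xs := funext hu
  intro t x _ m hm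
  have hx := afriatUtility_le uv μ xs t x
  have hxt := afriatUtility_apply_self hafriat t
  linarith

/-- Rationalization step: given utility numbers solving the quasilinear Afriat inequalities,
the quasilinear utility `v(x,m) = u(x) + m` built from
`u(x) = min_t { u_t + μ^t(x^t) − μ^t(x) }` rationalizes the experiment. -/
theorem afriat_extension_rationalizes {n T : ℕ} (hT : 0 < T)
    (X : Set (Fin n → ℝ)) (xs : Fin T → (Fin n → ℝ)) (hxX : ∀ t, xs t ∈ X)
    (μ : Fin T → (Fin n → ℝ) → ℝ)
    (hcont : ∀ t, ContinuousOn (μ t) X)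
    (hdecr : ∀ t, ∀ x ∈ X, ∀ y ∈ X, x ≤ y → μ t y ≤ μ t x)
    (uv : Fin T → ℝ)
    (hafriat : ∀ t s : Fin T, uv t - uv s ≥ μ t (xs s) - μ t (xs t))
    (u : (Fin n → ℝ) → ℝ)
    (hu : ∀ x, u x = sInf (Set.range fun t : Fin T => uv t + μ t (xs t) - μ t x)) :
    ∀ t, ∀ x ∈ X, ∀ m : ℝ, m ≤ μ t x → u x + m ≤ u (xs t) + μ t (xs t) :=
  afriat_extension_rationalizes_general X xs μ uv hafriat u hu
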